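/- arXiv:2208.14787 — 2 statements merged into one kernel-verified Lean document; each statement's English description precedes it below -/
import Mathlib

section
/- Let R be an RC-closed collection of strings over the DNA alphabet and let X be a nonempty string over the DNA alphabet. Then the multiset of complemented left-context symbols { π(a) : a is the left-context symbol of an occurrence of X in a string of R } equals the multiset of right-context symbols { b : b is the right-context symbol of an occurrence of the reverse complement X̂ in a string of R }. -/
/-- The DNA alphabet Σ = {A, C, G, T}. -/
inductive Base : Type
  | A | C | G | T
  deriving DecidableEq, Repr

instance instFintypeBase : Fintype Base :=
  ⟨{Base.A, Base.C, Base.G, Base.T}, fun x => by cases x <;> simp⟩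

/-- The DNA complement permutation π: A ↔ T, C ↔ G. -/
def comp : Base → Base
  | .A => .T
  | .T => .A
  | .C => .G
  | .G => .C

/-- The reverse complement Ŵ of a DNA string W. -/
def revComp (W : List Base) : List Base := W.reverse.map comp

/-- `W` occurs in `T` at (0-indexed) position `i`, i.e. `T[i..i+|W|-1] = W`. -/
def occursAt (W T : List Base) (i : ℕ) : Prop :=
  i + W.length ≤ T.length ∧ (T.drop i).take W.length = W

instance (W T : List Base) : DecidablePred (occursAt W T) := fun i =>
  inferInstanceAs (Decidable (_ ∧ _))

/-- The number of occurrences of `W` in `T`. -/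
noncomputable def occCount (W T : List Base) : ℕ := {i | occursAt W T i}.ncard

/-- The alphabet with the sentinel `$`: the sentinel is `⊥`, the DNA symbols are
coerced. The complement permutation is extended by `π($) = $`
(i.e. `WithBot.map comp ⊥ = ⊥`). -/
abbrev SymB := WithBot Base

/-- Left-context symbol of an occurrence of a string at (0-indexed) position `i`
in `T`: the symbol `T[i-1]` if `i > 0`, and the sentinel `$` otherwise. -/
def leftCtx (T : List Base) (i : ℕ) : SymB :=
  if i = 0 then ⊥ else (T[i-1]?).elim ⊥ (fun a => (a : SymB))

/-- Right-context symbol of an occurrence of a string of length `m` at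
(0-indexed) position `i` in `T`: the symbol `T[i+m]` if the occurrence does not
end at the last position of `T`, and the sentinel `$` otherwise. -/
def rightCtx (T : List Base) (m i : ℕ) : SymB :=
  (T[i+m]?).elim ⊥ (fun a => (a : SymB))

/-- A collection (multiset) of strings is RC-closed if every string has the same
multiplicity as its reverse complement. -/
def RCClosed (R : Multiset (List Base)) : Prop :=
  ∀ T : List Base, R.count T = R.count (revComp T)

/-- The multiset of left-context symbols of all occurrences of `X` among the
strings of `R` (with multiplicity). -/
def leftCtxs (R : Multiset (List Base)) (X : List Base) : Multiset SymB :=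
  R.bind (fun T =>
    ((Multiset.range (T.length + 1)).filter (occursAt X T)).map (fun i => leftCtx T i))

/-- The multiset of right-context symbols of all occurrences of `X` among the
strings of `R` (with multiplicity). -/
def rightCtxs (R : Multiset (List Base)) (X : List Base) : Multiset SymB :=
  R.bind (fun T =>
    ((Multiset.range (T.length + 1)).filter (occursAt X T)).map
      (fun i => rightCtx T X.length i))

/-!
Reverse complementation maps an occurrence of `X` at position `i` of `T` to an occurrence of
`X̂` at position `|T| - |X| - i` of `T̂`, and turns the symbol just before the former into the
complement of the symbol just after the latter (the sentinel going to the sentinel). Summed over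
`T ∈ R`, this identifies the two multisets with the strings of `R` relabelled by `T ↦ T̂`, which
leaves `R` unchanged when `R` is RC-closed.
-/

lemma comp_involutive : Function.Involutive comp := by
  intro b; cases b <;> rfl

lemma revComp_involutive : Function.Involutive revComp := by
  intro W
  simp [revComp, List.map_reverse, comp_involutive.comp_self]

@[simp]
lemma length_revComp (W : List Base) : (revComp W).length = W.length := by
  simp [revComp]

@[simp]
lemma revComp_append (u v : List Base) : revComp (u ++ v) = revComp v ++ revComp u := by
  simp [revComp]

lemma head?_revComp (u : List Base) : (revComp u).head? = u.getLast?.map comp := by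
  simp [revComp, List.head?_reverse]

lemma occursAt_iff_exists_append {W T : List Base} {i : ℕ} :
    occursAt W T i ↔ ∃ u v, T = u ++ W ++ v ∧ u.length = i := by
  constructor
  · rintro ⟨hlen, hW⟩
    refine ⟨T.take i, T.drop (i + W.length), ?_, by simp; omega⟩
    have hdrop : T.drop i = W ++ T.drop (i + W.length) := by
      rw [← List.take_append_drop W.length (T.drop i), hW, List.drop_drop]
    rw [List.append_assoc, ← hdrop, List.take_append_drop]
  · rintro ⟨u, v, rfl, rfl⟩
    exact ⟨by simp, by simp⟩

lemma occursAt_revComp {W T : List Base} {i : ℕ} (h : occursAt W T i) :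
    occursAt (revComp W) (revComp T) (T.length - W.length - i) := by
  obtain ⟨u, v, rfl, rfl⟩ := occursAt_iff_exists_append.mp h
  exact occursAt_iff_exists_append.mpr
    ⟨revComp v, revComp u, by simp, by simp; omega⟩

lemma occursAt_revComp_iff {W T : List Base} {j : ℕ} :
    occursAt (revComp W) (revComp T) j ↔
      j + W.length ≤ T.length ∧ occursAt W T (T.length - W.length - j) := by
  constructor
  · intro h
    have hlen : j + W.length ≤ T.length := by simpa using h.1
    refine ⟨hlen, ?_⟩
    have := occursAt_revComp h
    rwa [revComp_involutive W, revComp_involutive T, length_revComp, length_revComp] at this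
  · rintro ⟨hlen, h⟩
    have := occursAt_revComp h
    rwa [show T.length - W.length - (T.length - W.length - j) = j by omega] at this

lemma leftCtx_append (u w : List Base) :
    leftCtx (u ++ w) u.length = u.getLast?.elim ⊥ (fun a => (a : SymB)) := by
  rcases List.eq_nil_or_concat u with rfl | ⟨u, a, rfl⟩ <;> simp [leftCtx]

lemma rightCtx_append (u w v : List Base) :
    rightCtx (u ++ w ++ v) w.length u.length = v.head?.elim ⊥ (fun a => (a : SymB)) := by
  rcases v with _ | ⟨a, v⟩ <;> simp [rightCtx]

lemma map_comp_leftCtx {W T : List Base} {i : ℕ} (h : occursAt W T i) :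
    WithBot.map comp (leftCtx T i) =
      rightCtx (revComp T) W.length (T.length - W.length - i) := by
  obtain ⟨u, v, rfl, rfl⟩ := occursAt_iff_exists_append.mp h
  have hpos : (u ++ W ++ v).length - W.length - u.length = (revComp v).length := by
    simp; omega
  rw [hpos, revComp_append, revComp_append, ← List.append_assoc, ← length_revComp W,
    rightCtx_append, List.append_assoc, leftCtx_append, head?_revComp]
  cases u.getLast? <;> rfl

lemma filter_occursAt_revComp (W T : List Base) :
    (Multiset.range ((revComp T).length + 1)).filter (occursAt (revComp W) (revComp T)) =
      ((Multiset.range (T.length + 1)).filter (occursAt W T)).map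
        (T.length - W.length - ·) := by
  refine (Multiset.Nodup.ext ((Multiset.nodup_range _).filter _) ?_).mpr fun j => ?_
  · refine ((Multiset.nodup_range _).filter _).map_on fun i hi i' hi' hii' => ?_
    have := (Multiset.mem_filter.mp hi).2.1
    have := (Multiset.mem_filter.mp hi').2.1
    omega
  · simp only [Multiset.mem_filter, Multiset.mem_map, Multiset.mem_range, length_revComp,
      occursAt_revComp_iff]
    constructor
    · rintro ⟨-, hlen, h⟩
      exact ⟨_, ⟨by omega, h⟩, by omega⟩
    · rintro ⟨i, ⟨-, h⟩, rfl⟩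
      have hlen := h.1
      refine ⟨by omega, by omega, ?_⟩
      rwa [show T.length - W.length - (T.length - W.length - i) = i by omega]

lemma map_comp_leftCtx_occurrences (W T : List Base) :
    ((Multiset.range (T.length + 1)).filter (occursAt W T)).map
        (fun i => WithBot.map comp (leftCtx T i)) =
      ((Multiset.range ((revComp T).length + 1)).filter (occursAt (revComp W) (revComp T))).map
        (fun j => rightCtx (revComp T) (revComp W).length j) := by
  rw [filter_occursAt_revComp, Multiset.map_map, length_revComp]
  exact Multiset.map_congr rfl fun i hi => map_comp_leftCtx (Multiset.mem_filter.mp hi).2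

lemma RCClosed.map_revComp {R : Multiset (List Base)} (hR : RCClosed R) :
    R.map revComp = R := by
  ext T
  have := Multiset.count_map_eq_count' revComp R revComp_involutive.injective (revComp T)
  rwa [revComp_involutive, ← hR] at this

theorem stmt_3_general (R : Multiset (List Base)) (hR : RCClosed R)
    (X : List Base) :
    (leftCtxs R X).map (WithBot.map comp) = rightCtxs R (revComp X) := by
  rw [leftCtxs, rightCtxs, Multiset.map_bind]
  conv_rhs => rw [← hR.map_revComp, Multiset.bind_map]
  simp only [Multiset.map_map, Function.comp_def]
  exact Multiset.bind_congr fun T _ => map_comp_leftCtx_occurrences X T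

/-- in an RC-closed collection `R`, for a nonempty DNA string `X`,
the multiset of complemented left-context symbols of the occurrences of `X`
equals the multiset of right-context symbols of the occurrences of `X̂`. -/
theorem stmt_3 (R : Multiset (List Base)) (hR : RCClosed R)
    (X : List Base) (hX : X ≠ []) :
    (leftCtxs R X).map (WithBot.map comp) = rightCtxs R (revComp X) :=
  stmt_3_general R hR X
end

section
/- Let R be a collection of strings over the DNA alphabet and let X be a nonempty string that is both left-maximal and right-maximal in R. Then there exist two occurrences of X in strings of R, say T_x[a..b] = X = T_y[a'..b'] with (T_x, a) ≠ (T_y, a'), that form a MEM of length |X|: their left-context symbols differ and their right-context symbols differ, hence the match cannot be extended on either side. -/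
/-- `W` is left-maximal in `R` if its occurrences among the strings of `R` have
at least two distinct left-context symbols. -/
def LeftMaximal (R : Multiset (List Base)) (W : List Base) : Prop :=
  ∃ T₁ ∈ R, ∃ T₂ ∈ R, ∃ i₁ i₂ : ℕ,
    occursAt W T₁ i₁ ∧ occursAt W T₂ i₂ ∧ leftCtx T₁ i₁ ≠ leftCtx T₂ i₂

/-- `W` is right-maximal in `R` if its occurrences among the strings of `R` have
at least two distinct right-context symbols. -/
def RightMaximal (R : Multiset (List Base)) (W : List Base) : Prop :=
  ∃ T₁ ∈ R, ∃ T₂ ∈ R, ∃ i₁ i₂ : ℕ,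
    occursAt W T₁ i₁ ∧ occursAt W T₂ i₂ ∧
      rightCtx T₁ W.length i₁ ≠ rightCtx T₂ W.length i₂

/-- A pair of occurrences of a common string of length `m`, at position `a` in
`Tx` and position `a'` in `Ty` (0-indexed), is a MEM if it cannot be extended:
(`a = 0` or `a' = 0` or `Tx[a-1] ≠ Ty[a'-1]`) and (the occurrence ends at the
last position of `Tx` or of `Ty`, or `Tx[a+m] ≠ Ty[a'+m]`). -/
def IsMEM (Tx : List Base) (a : ℕ) (Ty : List Base) (a' : ℕ) (m : ℕ) : Prop :=
  (a = 0 ∨ a' = 0 ∨ Tx[a-1]? ≠ Ty[a'-1]?) ∧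
  (a + m = Tx.length ∨ a' + m = Ty.length ∨ Tx[a+m]? ≠ Ty[a'+m]?)


/-- If `f` separates `x₁, x₂` but `g` does not, a point `z` where `g` takes another value has
`f z` different from `f x₁` or from `f x₂`. -/
theorem Set.exists_pair_apply_ne_and_apply_ne {α β γ : Type*} {s : Set α} {f : α → β}
    {g : α → γ} (hf : ∃ x ∈ s, ∃ y ∈ s, f x ≠ f y) (hg : ∃ x ∈ s, ∃ y ∈ s, g x ≠ g y) :
    ∃ x ∈ s, ∃ y ∈ s, f x ≠ f y ∧ g x ≠ g y := by
  obtain ⟨x₁, hx₁, x₂, hx₂, hf₁₂⟩ := hf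
  by_cases hg₁₂ : g x₁ = g x₂
  · obtain ⟨z, hz, hgz⟩ : ∃ z ∈ s, g z ≠ g x₁ := by
      obtain ⟨y₁, hy₁, y₂, hy₂, hg'⟩ := hg
      by_cases h : g y₁ = g x₁
      · exact ⟨y₂, hy₂, fun h' => hg' (h.trans h'.symm)⟩
      · exact ⟨y₁, hy₁, h⟩
    by_cases hfz : f z = f x₁
    · exact ⟨z, hz, x₂, hx₂, hfz ▸ hf₁₂, hg₁₂ ▸ hgz⟩
    · exact ⟨z, hz, x₁, hx₁, hfz, hgz⟩
  · exact ⟨x₁, hx₁, x₂, hx₂, hf₁₂, hg₁₂⟩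

theorem IsMEM.of_leftCtx_ne_of_rightCtx_ne {Tx Ty : List Base} {a a' m : ℕ}
    (hl : leftCtx Tx a ≠ leftCtx Ty a') (hr : rightCtx Tx m a ≠ rightCtx Ty m a') :
    IsMEM Tx a Ty a' m := by
  constructor
  · by_contra! h
    obtain ⟨ha, ha', hsym⟩ := h
    exact hl (by simp [leftCtx, ha, ha', hsym])
  · by_contra! h
    exact hr (by simp [rightCtx, h.2.2])

theorem stmt_10_general (R : Multiset (List Base)) (X : List Base)
    (hL : LeftMaximal R X) (hRt : RightMaximal R X) :
    ∃ Tx ∈ R, ∃ Ty ∈ R, ∃ a a' : ℕ,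
      occursAt X Tx a ∧ occursAt X Ty a' ∧ (Tx, a) ≠ (Ty, a') ∧
      leftCtx Tx a ≠ leftCtx Ty a' ∧
      rightCtx Tx X.length a ≠ rightCtx Ty X.length a' ∧
      IsMEM Tx a Ty a' X.length := by
  let occurrences : Set (List Base × ℕ) := {p | p.1 ∈ R ∧ occursAt X p.1 p.2}
  obtain ⟨⟨Tx, a⟩, ⟨hx, ox⟩, ⟨Ty, a'⟩, ⟨hy, oy⟩, hl, hr⟩ :=
    Set.exists_pair_apply_ne_and_apply_ne (s := occurrences)
      (f := fun p => leftCtx p.1 p.2) (g := fun p => rightCtx p.1 X.length p.2)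
      (by obtain ⟨T₁, h₁, T₂, h₂, i₁, i₂, o₁, o₂, hne⟩ := hL
          exact ⟨(T₁, i₁), ⟨h₁, o₁⟩, (T₂, i₂), ⟨h₂, o₂⟩, hne⟩)
      (by obtain ⟨T₁, h₁, T₂, h₂, i₁, i₂, o₁, o₂, hne⟩ := hRt
          exact ⟨(T₁, i₁), ⟨h₁, o₁⟩, (T₂, i₂), ⟨h₂, o₂⟩, hne⟩)
  exact ⟨Tx, hx, Ty, hy, a, a', ox, oy, fun h => hl (h ▸ rfl), hl, hr,
    IsMEM.of_leftCtx_ne_of_rightCtx_ne hl hr⟩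

/-- if a nonempty string `X` is both left-maximal and
right-maximal in the collection `R`, then there are two occurrences of `X` in
strings of `R` whose left-context symbols differ and whose right-context
symbols differ; hence they form a MEM of length `|X|`. -/
theorem stmt_10 (R : Multiset (List Base)) (X : List Base) (hX : X ≠ [])
    (hL : LeftMaximal R X) (hRt : RightMaximal R X) :
    ∃ Tx ∈ R, ∃ Ty ∈ R, ∃ a a' : ℕ,
      occursAt X Tx a ∧ occursAt X Ty a' ∧ (Tx, a) ≠ (Ty, a') ∧
      leftCtx Tx a ≠ leftCtx Ty a' ∧
      rightCtx Tx X.length a ≠ rightCtx Ty X.length a' ∧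
      IsMEM Tx a Ty a' X.length :=
  stmt_10_general R X hL hRt
end
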